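/- If T ∈ B(X) is decomposable and K ∈ B(X) is algebraic with TK = KT, then T + K is decomposable. -/

import Mathlib

/-!
Over `ℂ` the annihilating polynomial splits, `p = c ∏ (X - λᵢ)`, and one peels off the linear
factors. If `f` is an analytic family with values in `ker ((X - λ) q)(K)` along which
`(T + K - z) f → 0`, then `(K - λ) f` takes values in `ker q(K)` and, since `K - λ` commutes with
`T + K`, still satisfies `(T + K - z)(K - λ) f → 0`; by induction `(K - λ) f → 0`. Hence
`(T + λ - z) f → 0`, and property (β) of `T` at the shifted point `l0 - λ` gives `f → 0`.
The adjoint `T* + K*` is handled in the same way, since `K*` commutes with `T*` and `p(K*) = 0`.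
-/

open Filter Metric Polynomial

noncomputable section

variable {X : Type*} [NormedAddCommGroup X] [NormedSpace ℂ X]

/-- The commutator map `C(R,S)(A) = RA - AS`. -/
def commMap (R S : X →L[ℂ] X) : (X →L[ℂ] X) → (X →L[ℂ] X) := fun A => R ∘L A - A ∘L S

/-- Bishop's property (β) at a point `l0`. -/
def BishopBetaAt (T : X →L[ℂ] X) (l0 : ℂ) : Prop :=
  ∃ v > (0 : ℝ), ∀ U : Set ℂ, IsOpen U → U ⊆ ball l0 v →
    ∀ f : ℕ → ℂ → X, (∀ n, AnalyticOnNhd ℂ (f n) U) →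
      (∀ K ⊆ U, IsCompact K →
        TendstoUniformlyOn (fun n z => T (f n z) - z • f n z) 0 atTop K) →
      ∀ K ⊆ U, IsCompact K → TendstoUniformlyOn (fun n z => f n z) 0 atTop K

/-- The Banach-space dual (adjoint) operator `T*` acting on the dual space. -/
def dualOp (T : X →L[ℂ] X) : StrongDual ℂ X →L[ℂ] StrongDual ℂ X :=
  (ContinuousLinearMap.compL ℂ X X ℂ).flip T

/-- `T` is decomposable iff both `T` and its dual have Bishop's property (β) everywhere. -/
def Decomposable (T : X →L[ℂ] X) : Prop :=
  (∀ l : ℂ, BishopBetaAt T l) ∧ ∀ l : ℂ, BishopBetaAt (dualOp T) l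

def BishopBetaOnAt (T : X →L[ℂ] X) (M : Set X) (l0 : ℂ) : Prop :=
  ∃ v > (0 : ℝ), ∀ U : Set ℂ, IsOpen U → U ⊆ ball l0 v →
    ∀ f : ℕ → ℂ → X, (∀ n, AnalyticOnNhd ℂ (f n) U) → (∀ n, ∀ z ∈ U, f n z ∈ M) →
      TendstoLocallyUniformlyOn (fun n z => T (f n z) - z • f n z) 0 atTop U →
      TendstoLocallyUniformlyOn f 0 atTop U

theorem bishopBetaAt_iff_bishopBetaOnAt_univ {T : X →L[ℂ] X} {l0 : ℂ} :
    BishopBetaAt T l0 ↔ BishopBetaOnAt T Set.univ l0 := by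
  refine exists_congr fun v => and_congr_right fun _ =>
    forall_congr' fun U => forall_congr' fun hU => ?_
  simp only [Set.mem_univ, implies_true, forall_const,
    tendstoLocallyUniformlyOn_iff_forall_isCompact hU]

theorem bishopBetaOnAt_singleton_zero (T : X →L[ℂ] X) (l0 : ℂ) : BishopBetaOnAt T {0} l0 := by
  refine ⟨1, one_pos, fun U _ _ f _ hf0 _ => ?_⟩
  exact (tendsto_const_nhds.tendstoUniformlyOn_const U).tendstoLocallyUniformlyOn.congr
    fun n z hz => (hf0 n z hz).symm

theorem BishopBetaAt.add_smul_one {T : X →L[ℂ] X} {l c : ℂ} (h : BishopBetaAt T (l - c)) :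
    BishopBetaAt (T + c • 1) l := by
  obtain ⟨v, hv, H⟩ := bishopBetaAt_iff_bishopBetaOnAt_univ.mp h
  refine bishopBetaAt_iff_bishopBetaOnAt_univ.mpr ⟨v, hv, fun U hU hUb f hf _ hconv => ?_⟩
  have hshift : Set.MapsTo (· + c) ((· + c) ⁻¹' U) U := fun _ hw => hw
  have hball : (· + c) ⁻¹' U ⊆ ball (l - c) v := fun w hw => by
    simpa [dist_eq_norm, sub_sub_eq_add_sub, add_sub_right_comm] using hUb hw
  have hshifted := H _ (hU.preimage (continuous_add_const c)) hball (fun n w => f n (w + c))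
    (fun n => (hf n).comp (analyticOnNhd_id.add analyticOnNhd_const) hshift)
    (fun _ _ _ => Set.mem_univ _)
    ((hconv.comp _ hshift (continuous_add_const c).continuousOn).congr fun n w _ => by
      simp [add_smul])
  have hback : Set.MapsTo (· - c) U ((· + c) ⁻¹' U) := fun z hz => by simpa using hz
  have hunshifted := hshifted.comp _ hback (continuous_sub_right c).continuousOn
  simp only [Function.comp_def, sub_add_cancel] at hunshifted
  exact hunshifted

theorem BishopBetaOnAt.of_commute {S A : X →L[ℂ] X} {M N : Set X} {l0 : ℂ} (hSA : Commute S A)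
    (hMN : Set.MapsTo A M N) (hN : BishopBetaOnAt S N l0) (hβ : BishopBetaAt (S - A) l0) :
    BishopBetaOnAt S M l0 := by
  obtain ⟨v₁, hv₁, H₁⟩ := hN
  obtain ⟨v₂, hv₂, H₂⟩ := bishopBetaAt_iff_bishopBetaOnAt_univ.mp hβ
  refine ⟨min v₁ v₂, lt_min hv₁ hv₂, fun U hU hUb f hf hfM hconv => ?_⟩
  have hAS (y : X) : A (S y) = S (A y) := congrArg (fun B : X →L[ℂ] X => B y) hSA.eq.symm
  have hAconv : TendstoLocallyUniformlyOn (fun n z => A (f n z)) 0 atTop U := by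
    refine H₁ U hU (hUb.trans (ball_subset_ball (min_le_left _ _))) _
      (fun n => A.comp_analyticOnNhd (hf n)) (fun n z hz => hMN (hfM n z hz)) ?_
    have hAimage := A.uniformContinuous.comp_tendstoLocallyUniformlyOn hconv
    refine (hAimage.congr fun n z _ => ?_).congr_right fun z _ => ?_
    · simp [hAS]
    · simp
  have hdiff := hconv.sub hAconv
  rw [sub_zero] at hdiff
  refine H₂ U hU (hUb.trans (ball_subset_ball (min_le_right _ _))) f hf
    (fun _ _ _ => Set.mem_univ _) (hdiff.congr fun n z _ => ?_)
  simp only [Pi.sub_apply, sub_apply]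
  abel

theorem bishopBetaOnAt_ker_aeval_prod_X_sub_C {T K : X →L[ℂ] X} (hT : ∀ l, BishopBetaAt T l)
    (hTK : Commute T K) (s : Multiset ℂ) (l0 : ℂ) :
    BishopBetaOnAt (T + K) {y | aeval K (s.map fun a => Polynomial.X - C a).prod y = 0} l0 := by
  induction s using Multiset.induction_on with
  | empty => simpa using bishopBetaOnAt_singleton_zero (T + K) l0
  | cons a s ih =>
    refine ih.of_commute (A := K - a • 1) ?_ (fun y hy => ?_) ?_
    · exact (hTK.add_left (Commute.refl K)).sub_right ((Commute.one_right _).smul_right a)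
    · have hA : aeval K (Polynomial.X - C a) = K - a • 1 := by
        simp [Algebra.algebraMap_eq_smul_one]
      rw [Multiset.map_cons, Multiset.prod_cons, mul_comm, map_mul, hA] at hy
      exact hy
    · rw [show T + K - (K - a • 1) = T + a • 1 by abel]
      exact (hT (l0 - a)).add_smul_one

theorem BishopBetaAt.add_of_aeval_eq_zero {T K : X →L[ℂ] X} {p : Polynomial ℂ}
    (hT : ∀ l, BishopBetaAt T l) (hTK : Commute T K) (hp : p ≠ 0) (hpK : aeval K p = 0)
    (l : ℂ) : BishopBetaAt (T + K) l := by
  have hprod : aeval K (p.roots.map fun a => Polynomial.X - C a).prod = 0 := by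
    rw [← C_leadingCoeff_mul_prod_multiset_X_sub_C (IsAlgClosed.card_roots_eq_natDegree (p := p)),
      map_mul, aeval_C, Algebra.algebraMap_eq_smul_one, smul_one_mul] at hpK
    exact (smul_eq_zero.mp hpK).resolve_left (leadingCoeff_ne_zero.mpr hp)
  have hker := bishopBetaOnAt_ker_aeval_prod_X_sub_C hT hTK p.roots l
  rw [hprod] at hker
  exact bishopBetaAt_iff_bishopBetaOnAt_univ.mpr (by simpa using hker)

theorem dualOp_add (A B : X →L[ℂ] X) : dualOp (A + B) = dualOp A + dualOp B :=
  map_add _ A B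

theorem dualOp_mul (A B : X →L[ℂ] X) : dualOp (A * B) = dualOp B * dualOp A := rfl

set_option synthInstance.maxHeartbeats 100000 in
theorem dualOp_pow (A : X →L[ℂ] X) (n : ℕ) : dualOp (A ^ n) = dualOp A ^ n := by
  induction n with
  | zero => rfl
  | succ n ih => rw [pow_succ, dualOp_mul, ih, pow_succ']

theorem dualOp_aeval (A : X →L[ℂ] X) (p : Polynomial ℂ) :
    dualOp (aeval A p) = aeval (dualOp A) p := by
  simp only [aeval_eq_sum_range, ← dualOp_pow]
  exact map_sum ((ContinuousLinearMap.compL ℂ X X ℂ).flip) _ _ |>.trans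
    (Finset.sum_congr rfl fun i _ => map_smul _ _ _)

theorem stmt15_general (T K : X →L[ℂ] X) (p : Polynomial ℂ)
    (hT : Decomposable T) (hp : p ≠ 0) (hpK : aeval K p = 0) (hcomm : T * K = K * T) :
    Decomposable (T + K) := by
  have hpK' : aeval (dualOp K) p = 0 := by
    rw [← dualOp_aeval, hpK]
    exact map_zero _
  have hcomm' : Commute (dualOp T) (dualOp K) := by
    rw [Commute, SemiconjBy, ← dualOp_mul, ← dualOp_mul, hcomm]
  refine ⟨BishopBetaAt.add_of_aeval_eq_zero hT.1 hcomm hp hpK, ?_⟩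
  rw [dualOp_add]
  exact BishopBetaAt.add_of_aeval_eq_zero hT.2 hcomm' hp hpK'

theorem stmt15 [CompleteSpace X] (T K : X →L[ℂ] X) (p : Polynomial ℂ)
    (hT : Decomposable T) (hp : p ≠ 0) (hpK : aeval K p = 0) (hcomm : T * K = K * T) :
    Decomposable (T + K) :=
  stmt15_general T K p hT hp hpK hcomm
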